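/- arXiv:2210.06797 — 3 statements merged into one kernel-verified Lean document; each statement's English description precedes it below -/
import Mathlib

section
/- For every α ∈ ℝ with |α| ≠ 1, the improper integral ∫₀^∞ (sin ρ/ρ³ − cos ρ/ρ²) cos(αρ) dρ converges and equals (π/4)(1 − α²) if |α| < 1, and equals 0 if |α| > 1. -/
open MeasureTheory Real Filter

noncomputable section

/-!
The kernel `g c = sin c / c ^ 3 - cos c / c ^ 2` is, up to a factor `4`, the Fourier transform
of the parabolic bump `(1 - t ^ 2)₊`: `∫_{-1}^{1} (1 - t ^ 2) e^{-ict} dt = 4 g c`.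
Since `|g c| ≤ 3 / (1 + c ^ 2)`, Fourier inversion applies and recovers the bump at `α`; taking
real parts and folding the even integrand onto `(0, ∞)` gives
`∫₀^∞ g ρ cos (αρ) dρ = (π / 4) (1 - α ^ 2)₊`, and the truncated integrals converge to this
absolutely convergent one.
-/

open FourierTransform Set

-- At `x = 0` division by zero makes this `0` rather than the limit `1 / 3`; a null set.
def sinCosKernel (x : ℝ) : ℝ := sin x / x ^ 3 - cos x / x ^ 2

lemma sinCosKernel_neg (x : ℝ) : sinCosKernel (-x) = sinCosKernel x := by
  simp only [sinCosKernel, sin_neg, cos_neg]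
  ring

lemma measurable_sinCosKernel : Measurable sinCosKernel := by
  unfold sinCosKernel
  fun_prop

lemma abs_sin_sub_mul_cos_le (x : ℝ) : |sin x - x * cos x| ≤ 2 / 3 * |x| ^ 3 := by
  have h_sin := abs_sub_sin_le x
  have h_cos : |x * (1 - cos x)| ≤ |x| ^ 3 / 2 := by
    rw [abs_mul, abs_of_nonneg (sub_nonneg.2 (cos_le_one x))]
    calc |x| * (1 - cos x) ≤ |x| * (x ^ 2 / 2) := by
          gcongr; linarith [one_sub_sq_div_two_le_cos (x := x)]
      _ = |x| ^ 3 / 2 := by rw [← sq_abs]; ring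
  calc |sin x - x * cos x| = |x * (1 - cos x) - (x - sin x)| := by ring_nf
    _ ≤ |x * (1 - cos x)| + |x - sin x| := abs_sub _ _
    _ ≤ 2 / 3 * |x| ^ 3 := by linarith

lemma abs_sinCosKernel_le_two_thirds (x : ℝ) : |sinCosKernel x| ≤ 2 / 3 := by
  rcases eq_or_ne x 0 with rfl | hx
  · norm_num [sinCosKernel]
  have h_eq : sinCosKernel x = (sin x - x * cos x) / x ^ 3 := by
    unfold sinCosKernel
    field_simp
  rw [h_eq, abs_div, abs_pow, div_le_iff₀ (by positivity)]
  exact abs_sin_sub_mul_cos_le x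

lemma sq_mul_abs_sinCosKernel_le (x : ℝ) : x ^ 2 * |sinCosKernel x| ≤ 2 := by
  rcases eq_or_ne x 0 with rfl | hx
  · simp
  have h_eq : x ^ 2 * sinCosKernel x = sin x / x - cos x := by
    unfold sinCosKernel
    field_simp
  have h_sin : |sin x / x| ≤ 1 := by
    rw [abs_div, div_le_one (abs_pos.2 hx)]
    exact abs_sin_le_abs
  rw [← abs_of_nonneg (sq_nonneg x), ← abs_mul, h_eq]
  calc |sin x / x - cos x| ≤ |sin x / x| + |cos x| := abs_sub _ _
    _ ≤ 2 := by linarith [abs_cos_le_one x]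

lemma abs_sinCosKernel_le (x : ℝ) : |sinCosKernel x| ≤ 3 * (1 + x ^ 2)⁻¹ := by
  rw [← div_eq_mul_inv, le_div_iff₀ (by positivity)]
  linarith [abs_sinCosKernel_le_two_thirds x, sq_mul_abs_sinCosKernel_le x]

lemma integrable_sinCosKernel : Integrable sinCosKernel :=
  (integrable_inv_one_add_sq.const_mul 3).mono' measurable_sinCosKernel.aestronglyMeasurable
    (ae_of_all _ abs_sinCosKernel_le)

lemma integral_eq_two_mul_integral_Ioi_of_even {f : ℝ → ℝ} (hf : f.Even) :
    ∫ x, f x = 2 * ∫ x in Ioi 0, f x := by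
  rw [← integral_comp_abs]
  congr 1 with x
  rcases abs_choice x with h | h <;> rw [h]
  exact (hf x).symm

lemma re_fourierInv_ofReal {f : ℝ → ℝ} (hf : Integrable f) (w : ℝ) :
    (𝓕⁻ (fun v ↦ (f v : ℂ)) w).re = ∫ v, cos (2 * π * v * w) * f v := by
  rw [Real.fourierInv_eq', ← RCLike.re_to_complex, ← integral_re]
  · congr 1 with v
    rw [RCLike.re_to_complex, smul_eq_mul, mul_comm, Complex.re_ofReal_mul,
      Complex.exp_ofReal_mul_I_re, Real.inner_apply, mul_comm, ← mul_assoc]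
  · exact (hf.ofReal).bdd_mul (c := 1) (by fun_prop) (ae_of_all _ fun v ↦ by
      rw [Complex.norm_exp_ofReal_mul_I])

def parabolicBump (t : ℝ) : ℂ := ((max 0 (1 - t ^ 2) : ℝ) : ℂ)

lemma continuous_parabolicBump : Continuous parabolicBump := by
  unfold parabolicBump
  fun_prop

lemma parabolicBump_of_mem_Icc {t : ℝ} (ht : t ∈ Icc (-1) 1) : parabolicBump t = 1 - t ^ 2 := by
  have : t ^ 2 ≤ 1 := by nlinarith [ht.1, ht.2]
  simp [parabolicBump, this]

lemma parabolicBump_of_notMem_Icc {t : ℝ} (ht : t ∉ Icc (-1) 1) : parabolicBump t = 0 := by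
  have : 1 ≤ t ^ 2 := by
    rw [mem_Icc, not_and_or, not_le, not_le] at ht
    rcases ht with h | h <;> nlinarith
  simp [parabolicBump, this]

lemma integrable_parabolicBump : Integrable parabolicBump :=
  continuous_parabolicBump.integrable_of_hasCompactSupport
    (HasCompactSupport.intro isCompact_Icc fun _ ↦ parabolicBump_of_notMem_Icc)

open Complex in
lemma hasDerivAt_exp_mul_quadratic {c : ℝ} (hc : c ≠ 0) (t : ℝ) :
    HasDerivAt
      (fun t : ℝ ↦ exp (-(c * t) * I) * (I * (2 + c ^ 2) / c ^ 3 - 2 / c ^ 2 * t - I / c * t ^ 2))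
      (exp (-(c * t) * I) * (1 - t ^ 2)) t := by
  have h_id : HasDerivAt (fun t : ℝ ↦ (t : ℂ)) 1 t := (hasDerivAt_id t).ofReal_comp
  have h_arg : HasDerivAt (fun t : ℝ ↦ -(c * t) * I) (-(c * 1) * I) t :=
    (h_id.const_mul (c : ℂ)).neg.mul_const I
  have h_poly : HasDerivAt (fun t : ℝ ↦ I * (2 + c ^ 2) / c ^ 3 - 2 / c ^ 2 * t - I / c * t ^ 2)
      (0 - 2 / c ^ 2 * 1 - I / c * (2 * t ^ 1 * 1)) t :=
    ((hasDerivAt_const t _).sub (h_id.const_mul _)).sub ((h_id.pow 2).const_mul _)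
  refine (h_arg.cexp.mul h_poly).congr_deriv ?_
  have hc' : (c : ℂ) ≠ 0 := ofReal_ne_zero.2 hc
  field_simp
  ring_nf
  rw [I_sq]
  ring

open Complex in
lemma integral_exp_mul_one_sub_sq {c : ℝ} (hc : c ≠ 0) :
    ∫ t in (-1 : ℝ)..1, exp (-(c * t) * I) * (1 - t ^ 2) = ((4 * sinCosKernel c : ℝ) : ℂ) := by
  rw [intervalIntegral.integral_eq_sub_of_hasDerivAt (fun t _ ↦ hasDerivAt_exp_mul_quadratic hc t)
    ((by fun_prop : Continuous _).intervalIntegrable _ _)]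
  have hc' : (c : ℂ) ≠ 0 := ofReal_ne_zero.2 hc
  simp only [ofReal_one, ofReal_neg, mul_one, mul_neg, neg_neg]
  rw [exp_mul_I, exp_mul_I, Complex.cos_neg, Complex.sin_neg]
  unfold sinCosKernel
  push_cast
  field_simp
  ring_nf
  rw [I_sq]
  ring

lemma fourier_parabolicBump {ρ : ℝ} (hρ : ρ ≠ 0) :
    𝓕 parabolicBump ρ = ((4 * sinCosKernel (2 * π * ρ) : ℝ) : ℂ) := by
  rw [Real.fourier_real_eq_integral_exp_smul,
    ← setIntegral_eq_integral_of_forall_compl_eq_zero (s := Icc (-1) 1)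
      fun t ht ↦ by rw [parabolicBump_of_notMem_Icc ht, smul_zero],
    integral_Icc_eq_integral_Ioc, ← intervalIntegral.integral_of_le (by norm_num),
    ← integral_exp_mul_one_sub_sq (by positivity)]
  refine intervalIntegral.integral_congr fun t ht ↦ ?_
  rw [uIcc_of_le (by norm_num)] at ht
  simp only [parabolicBump_of_mem_Icc ht, smul_eq_mul]
  push_cast
  ring_nf

lemma fourier_parabolicBump_ae :
    𝓕 parabolicBump =ᵐ[volume] fun ρ ↦ ((4 * sinCosKernel (2 * π * ρ) : ℝ) : ℂ) := by
  filter_upwards [compl_mem_ae_iff.2 (measure_singleton (0 : ℝ))] with ρ hρ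
  exact fourier_parabolicBump hρ

lemma integrable_fourier_parabolicBump : Integrable (𝓕 parabolicBump) :=
  (((integrable_sinCosKernel.comp_mul_left' (by positivity)).const_mul 4).ofReal).congr
    fourier_parabolicBump_ae.symm

theorem integral_Ioi_sinCosKernel_mul_cos (α : ℝ) :
    ∫ ρ in Ioi 0, sinCosKernel ρ * cos (α * ρ) = π / 4 * max 0 (1 - α ^ 2) := by
  set Φ : ℝ → ℝ := fun s ↦ 4 * (sinCosKernel s * cos (α * s))
  have h_inv : 𝓕⁻ (fun ρ ↦ ((4 * sinCosKernel (2 * π * ρ) : ℝ) : ℂ)) α = parabolicBump α := by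
    rw [fourierInv_eq_fourier_neg, ← fourier_congr_ae fourier_parabolicBump_ae,
      ← fourierInv_eq_fourier_neg]
    exact integrable_parabolicBump.fourierInv_fourier_eq integrable_fourier_parabolicBump
      continuous_parabolicBump.continuousAt
  have h_re := congrArg Complex.re h_inv
  rw [re_fourierInv_ofReal ((integrable_sinCosKernel.comp_mul_left' (by positivity)).const_mul 4)]
    at h_re
  have h_even : Φ.Even := fun s ↦ by simp only [Φ, sinCosKernel_neg, mul_neg, cos_neg]
  have h_bump : max 0 (1 - α ^ 2) = 4 / π * ∫ ρ in Ioi 0, sinCosKernel ρ * cos (α * ρ) :=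
    calc max 0 (1 - α ^ 2) = (parabolicBump α).re := by simp [parabolicBump]
      _ = ∫ ρ, Φ (2 * π * ρ) := by
          rw [← h_re]
          congr 1 with ρ
          simp only [Φ]
          ring_nf
      _ = (2 * π)⁻¹ * ∫ s, Φ s := by
          rw [Measure.integral_comp_mul_left, abs_of_pos (by positivity), smul_eq_mul]
      _ = (2 * π)⁻¹ * (2 * ∫ s in Ioi 0, Φ s) := by
          rw [integral_eq_two_mul_integral_Ioi_of_even h_even]
      _ = 4 / π * ∫ ρ in Ioi 0, sinCosKernel ρ * cos (α * ρ) := by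
          rw [integral_const_mul]
          field_simp
  rw [h_bump]
  field_simp

theorem integral_sin_cos_kernel_general (α : ℝ) :
    Tendsto (fun T : ℝ =>
        ∫ ρ in (0:ℝ)..T, (Real.sin ρ / ρ ^ 3 - Real.cos ρ / ρ ^ 2) * Real.cos (α * ρ))
      atTop
      (nhds (if |α| < 1 then Real.pi / 4 * (1 - α ^ 2) else 0)) := by
  have h_int : IntegrableOn (fun ρ ↦ sinCosKernel ρ * cos (α * ρ)) (Ioi 0) :=
    (integrable_sinCosKernel.mul_bdd (c := 1) (by fun_prop)
      (ae_of_all _ fun ρ ↦ by simpa using abs_cos_le_one (α * ρ))).integrableOn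
  have h_val : π / 4 * max 0 (1 - α ^ 2) = if |α| < 1 then π / 4 * (1 - α ^ 2) else 0 := by
    split_ifs with h
    · rw [max_eq_right (by nlinarith [sq_abs α, abs_nonneg α])]
    · rw [max_eq_left (by nlinarith [sq_abs α, abs_nonneg α]), mul_zero]
  rw [← h_val, ← integral_Ioi_sinCosKernel_mul_cos]
  exact intervalIntegral_tendsto_integral_Ioi 0 h_int tendsto_id

/-- for `|α| ≠ 1`, the improper integral
`∫₀^∞ (sin ρ/ρ³ − cos ρ/ρ²) cos(αρ) dρ` converges, to `(π/4)(1 − α²)` if `|α| < 1` and to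
`0` if `|α| > 1`. -/
theorem integral_sin_cos_kernel (α : ℝ) (hα : |α| ≠ 1) :
    Tendsto (fun T : ℝ =>
        ∫ ρ in (0:ℝ)..T, (Real.sin ρ / ρ ^ 3 - Real.cos ρ / ρ ^ 2) * Real.cos (α * ρ))
      atTop
      (nhds (if |α| < 1 then Real.pi / 4 * (1 - α ^ 2) else 0)) :=
  integral_sin_cos_kernel_general α

end
end

section
/- Let M be a 3×3 real symmetric positive definite matrix and g: S² → ℝ a continuous function. Define F: ℝ³ → ℝ by F(x) = ∫_{S²} max(1 − α(x,ω)², 0) · g(ω) (Mω·ω)^{-1/2} dH²(ω), where α(x,ω) = (x·ω)(Mω·ω)^{-1/2}. Then F is continuously differentiable on ℝ³ and for every x ∈ ℝ³ and j ∈ {1,2,3}, ∂F/∂x_j (x) = −2 ∫_{S²} α(x,ω) · 1_{(−1,1)}(α(x,ω)) · ω_j g(ω) (Mω·ω)^{-1} dH²(ω). -/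
/-!
`F` is an average over `ω ∈ S²` of ridge functions `x ↦ φ(α(x, ω))`, where
`φ(s) = max(1 - s², 0)` is `2`-Lipschitz and `C¹` away from `s = ±1`, with derivative
`-2 s 1_{(-1,1)}(s)`. The Lipschitz bound dominates difference quotients, so one may
differentiate under the integral sign, and dominated convergence makes the derivative
continuous, as soon as for every `x` the set of `ω` with `α(x, ω) = ±1` is `H²`-null.

That set is the zero set on `S²` of the quadratic form `Mω·ω - (x·ω)²`, which is positive
on the plane `x⊥`. Hence at least two of its eigenvalues are positive, and its zero set on the
sphere is covered by two `C¹` curves, of Hausdorff dimension `1`. Finally `H²(S²) < ∞`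
because spherical coordinates are Lipschitz on a compact rectangle.
-/

open MeasureTheory Metric Matrix
open scoped ENNReal

noncomputable section

abbrev E3 := EuclideanSpace ℝ (Fin 3)

/-- The anisotropic kernel `W(x) = |x|⁻¹ Ψ(x/|x|)` as a real-valued function. -/
def W (Ψ : E3 → ℝ) (x : E3) : ℝ := ‖x‖⁻¹ * Ψ (‖x‖⁻¹ • x)

open Classical in
/-- The kernel with the convention `W(0) = +∞`, with values in `ℝ≥0∞`. -/
def kern (Ψ : E3 → ℝ) (x : E3) : ℝ≥0∞ :=
  if x = 0 then ∞ else ENNReal.ofReal (W Ψ x)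

/-- The nonlocal energy `I(μ) = ∬ W(x-y) dμ(y) dμ(x) + ∫ |x|² dμ(x)`. -/
def energy (Ψ : E3 → ℝ) (μ : Measure E3) : ℝ≥0∞ :=
  (∫⁻ x, ∫⁻ y, kern Ψ (x - y) ∂μ ∂μ) + ∫⁻ x, ENNReal.ofReal (‖x‖ ^ 2) ∂μ

/-- Fourier transform with the convention `φ̂(ξ) = (2π)^{-3/2} ∫ φ(x) e^{-i ξ·x} dx`. -/
def ftransform (φ : E3 → ℂ) (ξ : E3) : ℂ :=
  ((((2 * Real.pi) ^ ((3:ℝ)/2))⁻¹ : ℝ) : ℂ) *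
    ∫ x : E3, φ x * Complex.exp (-((inner ℝ ξ x : ℝ) : ℂ) * Complex.I)

/-- The hypothesis that the Fourier transform of `W` is `h(ξ/|ξ|)|ξ|⁻²`, in the sense of
tempered distributions: `∫ W(x) φ̂(x) dx = ∫ h(ξ/|ξ|)|ξ|⁻² φ(ξ) dξ` for every Schwartz `φ`. -/
def FourierRep (Ψ h : E3 → ℝ) : Prop :=
  ∀ φ : SchwartzMap E3 ℂ,
    ∫ x : E3, (W Ψ x : ℂ) * ftransform (fun y => φ y) x
      = ∫ ξ : E3, ((h (‖ξ‖⁻¹ • ξ) : ℝ) : ℂ) * (((‖ξ‖ ^ 2)⁻¹ : ℝ) : ℂ) * φ ξ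

/-- Membership in `SO(3)`. -/
def IsSO3 (R : Matrix (Fin 3) (Fin 3) ℝ) : Prop := R * Rᵀ = 1 ∧ R.det = 1

/-- The solid ellipsoid `R D(a) B̄`. -/
def ellipsoid (a : Fin 3 → ℝ) (R : Matrix (Fin 3) (Fin 3) ℝ) : Set E3 :=
  (Matrix.toEuclideanLin (R * Matrix.diagonal a)) '' Metric.closedBall 0 1

/-- The ellipsoid law: normalised Lebesgue measure on the ellipsoid. -/
def ellipsoidLaw (a : Fin 3 → ℝ) (R : Matrix (Fin 3) (Fin 3) ℝ) : Measure E3 :=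
  (volume (ellipsoid a R))⁻¹ • volume.restrict (ellipsoid a R)

/-- The semi-ellipsoid law supported on the ellipse `R Ẽ₀(a₁,a₂)`: the pushforward under
`(x₁,x₂) ↦ R(x₁,x₂,0)` of the measure on `ℝ²` with density
`(3/(2π a₁ a₂))·√(1 − x₁²/a₁² − x₂²/a₂²)` (the density vanishes outside the ellipse). -/
def semiEllipsoidLaw (a₁ a₂ : ℝ) (R : Matrix (Fin 3) (Fin 3) ℝ) : Measure E3 :=
  Measure.map
    (fun p : ℝ × ℝ =>
      Matrix.toEuclideanLin R ((EuclideanSpace.equiv (Fin 3) ℝ).symm ![p.1, p.2, 0]))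
    ((volume : Measure (ℝ × ℝ)).withDensity fun p =>
      ENNReal.ofReal ((3 / (2 * Real.pi * a₁ * a₂)) *
        Real.sqrt (1 - p.1 ^ 2 / a₁ ^ 2 - p.2 ^ 2 / a₂ ^ 2)))

/-- The quadratic form `Mω·ω`. -/
def qf (M : Matrix (Fin 3) (Fin 3) ℝ) (ω : E3) : ℝ := inner ℝ (Matrix.toEuclideanLin M ω) ω

/-- `α(x,ω) = (x·ω)(Mω·ω)^{-1/2}`. -/
def alphaM (M : Matrix (Fin 3) (Fin 3) ℝ) (x ω : E3) : ℝ :=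
  (inner ℝ x ω : ℝ) / Real.sqrt (qf M ω)

/-- `F(x) = ∫_{S²} max(1 − α(x,ω)², 0) g(ω) (Mω·ω)^{-1/2} dH²(ω)`. -/
def Ffun (M : Matrix (Fin 3) (Fin 3) ℝ) (g : E3 → ℝ) (x : E3) : ℝ :=
  ∫ ω in Metric.sphere (0:E3) 1,
    max (1 - alphaM M x ω ^ 2) 0 * g ω * (Real.sqrt (qf M ω))⁻¹ ∂μH[2]


open Set Filter
open scoped NNReal Topology

section RidgeIntegral

variable {Ω E : Type*} [MeasurableSpace Ω] {μ : Measure Ω}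
  [NormedAddCommGroup E] [NormedSpace ℝ E]
  {L : Ω → E →L[ℝ] ℝ} {w : Ω → ℝ} {φ φ' : ℝ → ℝ} {K : ℝ≥0} {N : Set ℝ} {C D : ℝ}

def ridgeIntegral (μ : Measure Ω) (φ : ℝ → ℝ) (L : Ω → E →L[ℝ] ℝ) (w : Ω → ℝ) (x : E) : ℝ :=
  ∫ ω, φ (L ω x) * w ω ∂μ

lemma LipschitzWith.abs_le_of_hasDerivAt (hφ : LipschitzWith K φ) {t a : ℝ}
    (h : HasDerivAt φ a t) : |a| ≤ K := by
  simpa [h.deriv] using norm_deriv_le_of_lipschitz (x₀ := t) hφ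

lemma aestronglyMeasurable_ridgeIntegral_deriv (hL : AEStronglyMeasurable L μ)
    (hw : AEStronglyMeasurable w μ) (hφ' : Measurable φ') (x : E) :
    AEStronglyMeasurable (fun ω => (φ' (L ω x) * w ω) • L ω) μ :=
  ((hφ'.comp_aemeasurable (hL.apply_continuousLinearMap x).aemeasurable).aestronglyMeasurable.mul
    hw).smul hL

theorem integrable_and_hasFDerivAt_ridgeIntegral [IsFiniteMeasure μ] (hL : AEStronglyMeasurable L μ)
    (hLC : ∀ᵐ ω ∂μ, ‖L ω‖ ≤ C) (hw : AEStronglyMeasurable w μ) (hwD : ∀ᵐ ω ∂μ, ‖w ω‖ ≤ D)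
    (hφ : LipschitzWith K φ) (hφ' : Measurable φ') (hderiv : ∀ t ∉ N, HasDerivAt φ (φ' t) t)
    {x : E} (hx : ∀ᵐ ω ∂μ, L ω x ∉ N) :
    Integrable (fun ω => (φ' (L ω x) * w ω) • L ω) μ ∧
      HasFDerivAt (ridgeIntegral μ φ L w) (∫ ω, (φ' (L ω x) * w ω) • L ω ∂μ) x := by
  have hφ_le (t : ℝ) : ‖φ t‖ ≤ ‖φ 0‖ + K * ‖t‖ := by
    have := hφ.dist_le_mul t 0
    rw [dist_eq_norm, dist_zero_right] at this
    linarith [norm_le_norm_add_norm_sub' (φ t) (φ 0)]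
  have hL_le (ω : Ω) (hω : ‖L ω‖ ≤ C) (y : E) : ‖L ω y‖ ≤ C * ‖y‖ :=
    ((L ω).le_opNorm y).trans (mul_le_mul_of_nonneg_right hω (norm_nonneg y))
  refine hasFDerivAt_integral_of_dominated_loc_of_lip' (s := univ) (bound := fun _ => K * C * D)
    univ_mem (fun y _ => (hφ.continuous.comp_aestronglyMeasurable
      (hL.apply_continuousLinearMap y)).mul hw) ?_
    (aestronglyMeasurable_ridgeIntegral_deriv hL hw hφ' x) ?_ (integrable_const _) ?_
  · refine Integrable.of_bound
      ((hφ.continuous.comp_aestronglyMeasurable (hL.apply_continuousLinearMap x)).mul hw)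
      ((‖φ 0‖ + K * (C * ‖x‖)) * D) ?_
    filter_upwards [hLC, hwD] with ω hLω hwω
    have : 0 ≤ C := (norm_nonneg _).trans hLω
    rw [norm_mul]
    exact mul_le_mul ((hφ_le _).trans (by gcongr; exact hL_le ω hLω x)) hwω (norm_nonneg _)
      (by positivity)
  · filter_upwards [hLC, hwD] with ω hLω hwω y _
    have : 0 ≤ C := (norm_nonneg _).trans hLω
    calc ‖φ (L ω y) * w ω - φ (L ω x) * w ω‖ = dist (φ (L ω y)) (φ (L ω x)) * ‖w ω‖ := by
          rw [← sub_mul, norm_mul, dist_eq_norm]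
      _ ≤ (K * (C * ‖y - x‖)) * D := by
          refine mul_le_mul ((hφ.dist_le_mul _ _).trans ?_) hwω (norm_nonneg _) (by positivity)
          rw [dist_eq_norm, ← map_sub]
          gcongr
          exact hL_le ω hLω _
      _ = K * C * D * ‖y - x‖ := by ring
  · filter_upwards [hx] with ω hω
    refine (((hderiv _ hω).comp_hasFDerivAt x (L ω).hasFDerivAt).mul_const (w ω)).congr_fderiv ?_
    rw [smul_smul, mul_comm]

theorem continuous_integral_ridgeIntegral_deriv [IsFiniteMeasure μ] (hL : AEStronglyMeasurable L μ)
    (hLC : ∀ᵐ ω ∂μ, ‖L ω‖ ≤ C) (hw : AEStronglyMeasurable w μ) (hwD : ∀ᵐ ω ∂μ, ‖w ω‖ ≤ D)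
    (hφ : LipschitzWith K φ) (hφ' : Measurable φ') (hderiv : ∀ t ∉ N, HasDerivAt φ (φ' t) t)
    (hφ'_cont : ∀ t ∉ N, ContinuousAt φ' t) (hN : ∀ x, ∀ᵐ ω ∂μ, L ω x ∉ N) :
    Continuous fun x => ∫ ω, (φ' (L ω x) * w ω) • L ω ∂μ := by
  refine continuous_iff_continuousAt.2 fun x₀ => continuousAt_of_dominated
    (bound := fun _ => K * D * C)
    (Eventually.of_forall (aestronglyMeasurable_ridgeIntegral_deriv hL hw hφ'))
    (Eventually.of_forall fun x => ?_) (integrable_const _) ?_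
  · filter_upwards [hLC, hwD, hN x] with ω hLω hwω hω
    rw [norm_smul, norm_mul, Real.norm_eq_abs]
    have : 0 ≤ D := (norm_nonneg _).trans hwω
    gcongr
    exact hφ.abs_le_of_hasDerivAt (hderiv _ hω)
  · filter_upwards [hN x₀] with ω hω
    exact (((hφ'_cont _ hω).comp (L ω).continuous.continuousAt).mul continuousAt_const).smul
      continuousAt_const

theorem contDiff_one_ridgeIntegral [IsFiniteMeasure μ] (hL : AEStronglyMeasurable L μ)
    (hLC : ∀ᵐ ω ∂μ, ‖L ω‖ ≤ C) (hw : AEStronglyMeasurable w μ) (hwD : ∀ᵐ ω ∂μ, ‖w ω‖ ≤ D)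
    (hφ : LipschitzWith K φ) (hφ' : Measurable φ') (hderiv : ∀ t ∉ N, HasDerivAt φ (φ' t) t)
    (hφ'_cont : ∀ t ∉ N, ContinuousAt φ' t) (hN : ∀ x, ∀ᵐ ω ∂μ, L ω x ∉ N) :
    ContDiff ℝ 1 (ridgeIntegral μ φ L w) := by
  have hF x := (integrable_and_hasFDerivAt_ridgeIntegral hL hLC hw hwD hφ hφ' hderiv (hN x)).2
  refine contDiff_one_iff_fderiv.2 ⟨fun x => (hF x).differentiableAt, ?_⟩
  rw [funext fun x => (hF x).fderiv]
  exact continuous_integral_ridgeIntegral_deriv hL hLC hw hwD hφ hφ' hderiv hφ'_cont hN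

theorem fderiv_ridgeIntegral_apply [IsFiniteMeasure μ] (hL : AEStronglyMeasurable L μ)
    (hLC : ∀ᵐ ω ∂μ, ‖L ω‖ ≤ C) (hw : AEStronglyMeasurable w μ) (hwD : ∀ᵐ ω ∂μ, ‖w ω‖ ≤ D)
    (hφ : LipschitzWith K φ) (hφ' : Measurable φ') (hderiv : ∀ t ∉ N, HasDerivAt φ (φ' t) t)
    {x : E} (hx : ∀ᵐ ω ∂μ, L ω x ∉ N) (v : E) :
    fderiv ℝ (ridgeIntegral μ φ L w) x v = ∫ ω, φ' (L ω x) * w ω * L ω v ∂μ := by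
  obtain ⟨hint, hF⟩ := integrable_and_hasFDerivAt_ridgeIntegral hL hLC hw hwD hφ hφ' hderiv hx
  rw [hF.fderiv, ContinuousLinearMap.integral_apply hint]
  rfl

end RidgeIntegral

section TruncatedParabola

lemma lipschitzWith_max_one_sub_sq : LipschitzWith 2 fun s : ℝ => max (1 - s ^ 2) 0 := by
  have hproj (s : ℝ) : max (1 - s ^ 2) 0 = 1 - (projIcc (-1) 1 (by norm_num) s : ℝ) ^ 2 := by
    rcases le_or_gt s (-1) with h | h
    · rw [projIcc_of_le_left _ h, max_eq_right (by nlinarith)]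
      norm_num
    rcases le_or_gt 1 s with h' | h'
    · rw [projIcc_of_right_le _ h', max_eq_right (by nlinarith)]
      norm_num
    · rw [projIcc_of_mem _ ⟨h.le, h'.le⟩, max_eq_left (by nlinarith)]
  refine LipschitzWith.of_dist_le_mul fun s t => ?_
  set a : ℝ := (projIcc (-1) 1 (by norm_num) s : ℝ)
  set b : ℝ := (projIcc (-1) 1 (by norm_num) t : ℝ)
  have hab : |a - b| ≤ |s - t| := by
    simpa [Subtype.dist_eq, Real.dist_eq] using
      (LipschitzWith.projIcc (a := (-1 : ℝ)) (b := 1) (by norm_num)).dist_le_mul s t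
  have ha : |a| ≤ 1 := abs_le.2 ⟨(projIcc (-1) 1 _ s).2.1, (projIcc (-1) 1 _ s).2.2⟩
  have hb : |b| ≤ 1 := abs_le.2 ⟨(projIcc (-1) 1 _ t).2.1, (projIcc (-1) 1 _ t).2.2⟩
  rw [Real.dist_eq, Real.dist_eq, hproj, hproj, NNReal.coe_ofNat,
    show 1 - a ^ 2 - (1 - b ^ 2) = (b + a) * (b - a) by ring, abs_mul, abs_sub_comm]
  exact mul_le_mul ((abs_add_le _ _).trans (by linarith)) hab (abs_nonneg _) zero_le_two

lemma exists_eventually_max_one_sub_sq_eq {t : ℝ} (ht : t ∉ ({-1, 1} : Set ℝ)) :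
    ∃ c : ℝ, ∀ᶠ s in 𝓝 t, max (1 - s ^ 2) 0 = c * (1 - s ^ 2) ∧
      (Ioo (-1 : ℝ) 1).indicator (fun _ => 1) s = c := by
  rcases lt_trichotomy |t| 1 with h | h | h
  · refine ⟨1, ?_⟩
    filter_upwards [(isOpen_lt continuous_abs continuous_const).mem_nhds h] with s hs
    obtain ⟨h₁, h₂⟩ := abs_lt.1 hs
    exact ⟨by rw [one_mul, max_eq_left (by nlinarith)], indicator_of_mem (mem_Ioo.2 ⟨h₁, h₂⟩) _⟩
  · rcases abs_eq zero_le_one |>.1 h with rfl | rfl <;> simp at ht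
  · refine ⟨0, ?_⟩
    filter_upwards [(isOpen_lt continuous_const continuous_abs).mem_nhds h] with s hs
    have : 1 < s ^ 2 := by nlinarith [sq_abs s, abs_nonneg s]
    exact ⟨by rw [zero_mul, max_eq_right (by linarith)],
      indicator_of_notMem (fun hs' => (abs_lt.2 (mem_Ioo.1 hs')).not_gt hs) _⟩

lemma hasDerivAt_max_one_sub_sq {t : ℝ} (ht : t ∉ ({-1, 1} : Set ℝ)) :
    HasDerivAt (fun s : ℝ => max (1 - s ^ 2) 0)
      (-2 * t * (Ioo (-1 : ℝ) 1).indicator (fun _ => 1) t) t := by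
  obtain ⟨c, hc⟩ := exists_eventually_max_one_sub_sq_eq ht
  rw [hc.self_of_nhds.2]
  refine ((((hasDerivAt_pow 2 t).const_sub 1).const_mul c).congr_of_eventuallyEq
    (hc.mono fun s hs => hs.1)).congr_deriv ?_
  ring

lemma continuousAt_mul_indicator_Ioo {t : ℝ} (ht : t ∉ ({-1, 1} : Set ℝ)) :
    ContinuousAt (fun s : ℝ => -2 * s * (Ioo (-1 : ℝ) 1).indicator (fun _ => 1) s) t := by
  obtain ⟨c, hc⟩ := exists_eventually_max_one_sub_sq_eq ht
  have hcont : Continuous fun s : ℝ => -2 * s * c := by fun_prop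
  exact hcont.continuousAt.congr (hc.mono fun s hs => by simp only [hs.2])

lemma measurable_mul_indicator_Ioo :
    Measurable fun s : ℝ => -2 * s * (Ioo (-1 : ℝ) 1).indicator (fun _ => 1) s :=
  (measurable_const.mul measurable_id).mul (measurable_const.indicator measurableSet_Ioo)

end TruncatedParabola

section HausdorffMeasure

open Module Real

lemma ContDiff.hausdorffMeasure_range_eq_zero {E F : Type*} [NormedAddCommGroup E]
    [NormedSpace ℝ E] [FiniteDimensional ℝ E] [NormedAddCommGroup F] [NormedSpace ℝ F]
    [MeasurableSpace F] [BorelSpace F] {f : E → F} (hf : ContDiff ℝ 1 f) {d : ℝ≥0}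
    (hd : finrank ℝ E < d) : μH[d] (range f) = 0 :=
  hausdorffMeasure_of_dimH_lt (hf.dimH_range_le.trans_lt (by exact_mod_cast hd))

lemma exists_mem_Ioc_eq_sqrt_mul_cos_sin (u v : ℝ) :
    ∃ θ ∈ Ioc (-π) π, u = √(u ^ 2 + v ^ 2) * cos θ ∧ v = √(u ^ 2 + v ^ 2) * sin θ := by
  refine ⟨Complex.arg (u + v * Complex.I), Complex.arg_mem_Ioc _, ?_, ?_⟩ <;>
    rw [← Complex.norm_add_mul_I]
  · simp [Complex.norm_mul_cos_arg]
  · simp [Complex.norm_mul_sin_arg]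

def sphericalCoord (p : ℝ × ℝ) : E3 := !₂[cos p.1 * cos p.2, cos p.1 * sin p.2, sin p.1]

lemma contDiff_sphericalCoord : ContDiff ℝ 1 sphericalCoord := by
  refine (contDiff_piLp 2).2 fun i => ?_
  fin_cases i <;>
    simp only [sphericalCoord, Fin.isValue, Fin.zero_eta, Fin.mk_one, Fin.reduceFinMk, cons_val] <;>
    fun_prop

lemma sphere_subset_image_sphericalCoord :
    sphere (0 : E3) 1 ⊆ sphericalCoord '' (Icc (-π) π ×ˢ Icc (-π) π) := by
  intro ω hω
  have hsum : ω 0 ^ 2 + ω 1 ^ 2 + ω 2 ^ 2 = 1 := by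
    have := EuclideanSpace.real_norm_sq_eq ω
    rw [mem_sphere_zero_iff_norm.1 hω, Fin.sum_univ_three] at this
    linarith
  obtain ⟨φ, hφ, h₀, h₁⟩ := exists_mem_Ioc_eq_sqrt_mul_cos_sin (ω 0) (ω 1)
  obtain ⟨θ, hθ, hr, h₂⟩ := exists_mem_Ioc_eq_sqrt_mul_cos_sin √(ω 0 ^ 2 + ω 1 ^ 2) (ω 2)
  rw [sq_sqrt (by positivity), hsum, sqrt_one, one_mul] at hr h₂
  rw [hr] at h₀ h₁
  refine ⟨(θ, φ), ⟨Ioc_subset_Icc_self hθ, Ioc_subset_Icc_self hφ⟩, ?_⟩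
  ext i
  fin_cases i <;> simp [sphericalCoord, h₀, h₁, h₂]

lemma hausdorffMeasure_sphere_lt_top : μH[2] (sphere (0 : E3) 1) < ∞ := by
  obtain ⟨K, hK⟩ := contDiff_sphericalCoord.contDiffOn.exists_lipschitzOnWith one_ne_zero
    ((convex_Icc (-π) π).prod (convex_Icc (-π) π)) (isCompact_Icc.prod isCompact_Icc)
  calc μH[2] (sphere (0 : E3) 1)
      ≤ μH[2] (sphericalCoord '' (Icc (-π) π ×ˢ Icc (-π) π)) :=
        measure_mono sphere_subset_image_sphericalCoord
    _ ≤ (K : ℝ≥0∞) ^ (2 : ℝ) * μH[2] (Icc (-π) π ×ˢ Icc (-π) π) :=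
        hK.hausdorffMeasure_image_le zero_le_two
    _ < ∞ := by
        rw [hausdorffMeasure_prod_real]
        exact ENNReal.mul_lt_top (by simp) (isCompact_Icc.prod isCompact_Icc).measure_lt_top

end HausdorffMeasure

section QuadraticCone

open Module Real
open scoped RealInnerProductSpace

variable {E : Type*} [NormedAddCommGroup E] [InnerProductSpace ℝ E]

lemma eq_or_eq_neg_of_norm_smul_eq_one {c : ℝ} {v : E} (h : ‖c • v‖ = 1) :
    c • v = ‖v‖⁻¹ • v ∨ c • v = -(‖v‖⁻¹ • v) := by
  rw [norm_smul, Real.norm_eq_abs] at h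
  rcases abs_eq (inv_nonneg.2 (norm_nonneg v)) |>.1 (eq_inv_of_mul_eq_one_left h) with hc | hc
  · exact .inl (by rw [hc])
  · exact .inr (by rw [hc, neg_smul])

lemma pos_or_pos_of_eigenvectors {T : E →ₗ[ℝ] E} {x u v : E} {a b : ℝ}
    (hpos : ∀ w ≠ 0, ⟪x, w⟫ = 0 → 0 < ⟪T w, w⟫) (hu : ‖u‖ = 1) (hv : ‖v‖ = 1) (huv : ⟪u, v⟫ = 0)
    (hTu : T u = a • u) (hTv : T v = b • v) : 0 < a ∨ 0 < b := by
  by_contra! hab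
  have hquad (s t : ℝ) : ⟪T (s • u + t • v), s • u + t • v⟫ = a * s ^ 2 + b * t ^ 2 := by
    simp only [map_add, map_smul, hTu, hTv, inner_add_left, inner_add_right, inner_smul_left,
      inner_smul_right, real_inner_self_eq_norm_sq, hu, hv, huv, real_inner_comm u v, conj_trivial,
      one_pow, mul_one, mul_zero, add_zero, zero_add]
    ring
  have hnorm (s t : ℝ) : ‖s • u + t • v‖ ^ 2 = s ^ 2 + t ^ 2 := by
    rw [← real_inner_self_eq_norm_sq]
    simp only [inner_add_left, inner_add_right, inner_smul_left, inner_smul_right,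
      real_inner_self_eq_norm_sq, hu, hv, huv, real_inner_comm u v, conj_trivial, one_pow, mul_one,
      mul_zero, add_zero, zero_add]
    ring
  obtain ⟨s, t, hst, hx⟩ : ∃ s t : ℝ, s ^ 2 + t ^ 2 ≠ 0 ∧ ⟪x, s • u + t • v⟫ = 0 := by
    by_cases hxu : ⟪x, u⟫ = 0
    · exact ⟨1, 0, by norm_num, by simp [hxu]⟩
    · refine ⟨⟪x, v⟫, -⟪x, u⟫, by nlinarith [sq_nonneg ⟪x, v⟫, sq_pos_of_ne_zero hxu], ?_⟩
      simp only [inner_add_right, inner_smul_right]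
      ring
  have hw : s • u + t • v ≠ 0 := by
    intro h0
    apply hst
    rw [← hnorm, h0, norm_zero, sq, zero_mul]
  have := hpos _ hw hx
  rw [hquad] at this
  nlinarith [sq_nonneg s, sq_nonneg t]

theorem hausdorffMeasure_sphere_inter_quadric_eq_zero [MeasurableSpace E] [BorelSpace E]
    (b : OrthonormalBasis (Fin 3) ℝ E) {c : Fin 3 → ℝ} (h₀ : 0 < c 0) (h₁ : 0 < c 1) :
    μH[2] {ω ∈ sphere (0 : E) 1 | ∑ i, c i * ⟪b i, ω⟫ ^ 2 = 0} = 0 := by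
  -- the quadric is the cone over the ellipse `θ ↦ v θ` in the affine plane `⟪b 2, ·⟫ = 1`;
  -- for `c 2 ≥ 0` we have `√(-c 2) = 0` and the ellipse degenerates to the point `b 2`
  set v : ℝ → E := fun θ => (√(-c 2) * (√(c 0))⁻¹ * cos θ) • b 0
    + (√(-c 2) * (√(c 1))⁻¹ * sin θ) • b 1 + b 2 with hv_def
  have hv : ContDiff ℝ 1 v := by fun_prop
  have hv₀ (θ : ℝ) : v θ ≠ 0 := by
    intro h
    have := congrArg (⟪b 2, ·⟫) h
    simp [hv_def, inner_add_right, inner_smul_right, orthonormal_iff_ite.1 b.orthonormal] at this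
  set γ : ℝ → E := fun θ => ‖v θ‖⁻¹ • v θ
  have hγ : ContDiff ℝ 1 γ :=
    ((hv.norm ℝ hv₀).inv fun θ => norm_ne_zero_iff.2 (hv₀ θ)).smul hv
  refine measure_mono_null (fun ω ⟨hω, hq⟩ => ?_) (measure_union_null
    (hγ.hausdorffMeasure_range_eq_zero (d := 2) (by simp))
    (hγ.neg.hausdorffMeasure_range_eq_zero (d := 2) (by simp)))
  have hsum := b.sum_sq_norm_inner_right ω
  simp only [Fin.sum_univ_three, Real.norm_eq_abs, sq_abs, mem_sphere_zero_iff_norm.1 hω,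
    one_pow] at hsum hq
  set y₀ := ⟪b 0, ω⟫
  set y₁ := ⟪b 1, ω⟫
  set y₂ := ⟪b 2, ω⟫
  have hy₂ : y₂ ≠ 0 := by
    intro h
    rw [h] at hsum hq
    have e₀ : c 0 * y₀ ^ 2 = 0 := by
      linarith [mul_nonneg h₀.le (sq_nonneg y₀), mul_nonneg h₁.le (sq_nonneg y₁)]
    have e₁ : c 1 * y₁ ^ 2 = 0 := by
      linarith [mul_nonneg h₀.le (sq_nonneg y₀), mul_nonneg h₁.le (sq_nonneg y₁)]
    simp only [mul_eq_zero, h₀.ne', h₁.ne', false_or] at e₀ e₁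
    norm_num [e₀, e₁] at hsum
  obtain ⟨θ, -, hcos, hsin⟩ :=
    exists_mem_Ioc_eq_sqrt_mul_cos_sin (√(c 0) * y₀ / y₂) (√(c 1) * y₁ / y₂)
  have hr : (√(c 0) * y₀ / y₂) ^ 2 + (√(c 1) * y₁ / y₂) ^ 2 = -c 2 := by
    rw [div_pow, div_pow, mul_pow, mul_pow, sq_sqrt h₀.le, sq_sqrt h₁.le]
    field_simp
    linarith
  rw [hr] at hcos hsin
  have e₀ : y₀ = y₂ * (√(-c 2) * (√(c 0))⁻¹ * cos θ) := by
    rw [mul_right_comm, ← hcos]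
    field_simp
  have e₁ : y₁ = y₂ * (√(-c 2) * (√(c 1))⁻¹ * sin θ) := by
    rw [mul_right_comm, ← hsin]
    field_simp
  have hω_eq : ω = y₂ • v θ := calc
    ω = y₀ • b 0 + y₁ • b 1 + y₂ • b 2 := by
      simpa [Fin.sum_univ_three] using (b.sum_repr' ω).symm
    _ = y₂ • v θ := by rw [e₀, e₁]; simp only [hv_def, smul_add, smul_smul]
  rw [mem_sphere_zero_iff_norm, hω_eq] at hω
  rw [hω_eq]
  rcases eq_or_eq_neg_of_norm_smul_eq_one hω with h | h
  · exact .inl ⟨θ, h.symm⟩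
  · exact .inr ⟨θ, h.symm⟩

lemma LinearMap.IsSymmetric.inner_map_self_eq_sum_eigenvalues [FiniteDimensional ℝ E]
    {T : E →ₗ[ℝ] E} (hT : T.IsSymmetric) {n : ℕ} (hn : finrank ℝ E = n) (ω : E) :
    ⟪T ω, ω⟫ = ∑ i, hT.eigenvalues hn i * ⟪hT.eigenvectorBasis hn i, ω⟫ ^ 2 := by
  rw [← (hT.eigenvectorBasis hn).sum_inner_mul_inner (T ω) ω]
  refine Finset.sum_congr rfl fun i _ => ?_
  rw [hT, hT.apply_eigenvectorBasis, real_inner_comm ω, real_inner_smul_right]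
  simp only [RCLike.ofReal_real_eq_id, id_eq]
  ring

theorem hausdorffMeasure_sphere_inter_isotropicCone_eq_zero [FiniteDimensional ℝ E]
    [MeasurableSpace E] [BorelSpace E] (hE : finrank ℝ E = 3) {T : E →ₗ[ℝ] E}
    (hT : T.IsSymmetric) {x : E} (hpos : ∀ w ≠ 0, ⟪x, w⟫ = 0 → 0 < ⟪T w, w⟫) :
    μH[2] {ω ∈ sphere (0 : E) 1 | ⟪T ω, ω⟫ = 0} = 0 := by
  set b := hT.eigenvectorBasis hE
  set c := hT.eigenvalues hE
  have hc : Antitone c := hT.eigenvalues_antitone hE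
  have hTb (i : Fin 3) : T (b i) = c i • b i := hT.apply_eigenvectorBasis hE i
  -- the eigenvalues are sorted decreasingly, so only `c 2` can be nonpositive
  have h₁ : 0 < c 1 :=
    (pos_or_pos_of_eigenvectors hpos (b.orthonormal.1 1) (b.orthonormal.1 2)
      (b.orthonormal.2 (by decide)) (hTb 1) (hTb 2)).elim id
      fun h => h.trans_le (hc (by decide))
  refine measure_mono_null ?_
    (hausdorffMeasure_sphere_inter_quadric_eq_zero b (h₁.trans_le (hc (by decide))) h₁)
  rintro ω ⟨hω, hq⟩
  exact ⟨hω, by rw [← hq, hT.inner_map_self_eq_sum_eigenvalues hE]⟩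

end QuadraticCone

lemma IsCompact.exists_ae_restrict_norm_le {X F : Type*} [TopologicalSpace X] [T2Space X]
    [MeasurableSpace X] [OpensMeasurableSpace X] {μ : Measure X} [SeminormedAddCommGroup F]
    {s : Set X} (hs : IsCompact s) {f : X → F} (hf : ContinuousOn f s) :
    ∃ C, ∀ᵐ x ∂μ.restrict s, ‖f x‖ ≤ C :=
  let ⟨C, hC⟩ := hs.exists_bound_of_continuousOn hf
  ⟨C, (ae_restrict_mem hs.measurableSet).mono hC⟩

section AnisotropicProfile

open Real
open scoped RealInnerProductSpace

variable {M : Matrix (Fin 3) (Fin 3) ℝ}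

lemma qf_pos (hM : M.PosDef) {ω : E3} (hω : ω ≠ 0) : 0 < qf M ω := by
  have := hM.dotProduct_mulVec_pos (x := ω.ofLp) (by simpa using hω)
  simpa [qf, EuclideanSpace.inner_eq_star_dotProduct, dotProduct_comm] using this

lemma qf_nonneg (hM : M.PosDef) (ω : E3) : 0 ≤ qf M ω := by
  rcases eq_or_ne ω 0 with rfl | hω
  · simp [qf]
  · exact (qf_pos hM hω).le

theorem hausdorffMeasure_sphere_inter_sq_inner_eq_qf (hM : M.PosDef) (x : E3) :
    μH[2] {ω ∈ sphere (0 : E3) 1 | ⟪x, ω⟫ ^ 2 = qf M ω} = 0 := by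
  set T : E3 →ₗ[ℝ] E3 := toEuclideanLin M - (InnerProductSpace.rankOne ℝ x x : E3 →L[ℝ] E3)
  have hT : T.IsSymmetric := (isSymmetric_toEuclideanLin_iff.2 hM.1).sub
    (InnerProductSpace.isSymmetric_rankOne_self x)
  have hTω (ω : E3) : ⟪T ω, ω⟫ = qf M ω - ⟪x, ω⟫ ^ 2 := by
    simp only [T, qf, LinearMap.sub_apply, ContinuousLinearMap.coe_coe,
      InnerProductSpace.rankOne_apply, inner_sub_left, real_inner_smul_left]
    ring
  refine measure_mono_null ?_ (hausdorffMeasure_sphere_inter_isotropicCone_eq_zero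
    finrank_euclideanSpace_fin hT (x := x) fun w hw hxw => ?_)
  · rintro ω ⟨hω, h⟩
    exact ⟨hω, by rw [hTω, h, sub_self]⟩
  · simpa [hTω, hxw] using qf_pos hM hw

def alphaCLM (M : Matrix (Fin 3) (Fin 3) ℝ) (ω : E3) : E3 →L[ℝ] ℝ :=
  (√(qf M ω))⁻¹ • innerSL ℝ ω

@[simp]
lemma alphaCLM_apply (ω x : E3) : alphaCLM M ω x = alphaM M x ω := by
  simp [alphaCLM, alphaM, real_inner_comm, div_eq_inv_mul]

lemma Ffun_eq_ridgeIntegral (g : E3 → ℝ) :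
    Ffun M g = ridgeIntegral (μH[2].restrict (sphere (0 : E3) 1)) (fun s => max (1 - s ^ 2) 0)
      (alphaCLM M) (fun ω => g ω * (√(qf M ω))⁻¹) := by
  ext x
  simp only [Ffun, ridgeIntegral, alphaCLM_apply, mul_assoc]

lemma continuousOn_inv_sqrt_qf (hM : M.PosDef) :
    ContinuousOn (fun ω => (√(qf M ω))⁻¹) (sphere (0 : E3) 1) := by
  have hq : Continuous (qf M) :=
    (toEuclideanLin M).continuous_of_finiteDimensional.inner continuous_id
  refine hq.sqrt.continuousOn.inv₀ fun ω hω => (sqrt_pos.2 (qf_pos hM ?_)).ne'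
  exact ne_zero_of_mem_unit_sphere ⟨ω, hω⟩

lemma continuousOn_alphaCLM (hM : M.PosDef) : ContinuousOn (alphaCLM M) (sphere (0 : E3) 1) :=
  (continuousOn_inv_sqrt_qf hM).smul (innerSL ℝ (E := E3)).continuous.continuousOn

lemma ae_alphaM_notMem (hM : M.PosDef) (x : E3) :
    ∀ᵐ ω ∂μH[2].restrict (sphere (0 : E3) 1), alphaM M x ω ∉ ({-1, 1} : Set ℝ) := by
  rw [ae_restrict_iff' isClosed_sphere.measurableSet, ae_iff]
  refine measure_mono_null (fun ω hω => ?_) (hausdorffMeasure_sphere_inter_sq_inner_eq_qf hM x)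
  simp only [Classical.not_imp, not_not] at hω
  obtain ⟨hωs, hα⟩ := hω
  have hq : 0 < qf M ω := qf_pos hM (ne_zero_of_mem_unit_sphere ⟨ω, hωs⟩)
  have : alphaM M x ω ^ 2 = 1 := by
    rcases hα with h | h <;> simp_all
  rw [alphaM, div_pow, sq_sqrt hq.le, div_eq_one_iff_eq hq.ne'] at this
  exact ⟨hωs, this⟩

end AnisotropicProfile

/-- `F` is continuously differentiable, with partial derivatives
`∂F/∂x_j(x) = −2 ∫_{S²} α(x,ω) 1_{(−1,1)}(α(x,ω)) ω_j g(ω) (Mω·ω)⁻¹ dH²(ω)`. -/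
theorem Ffun_contDiff_and_fderiv
    (M : Matrix (Fin 3) (Fin 3) ℝ) (hM : M.PosDef)
    (g : E3 → ℝ) (hg : ContinuousOn g (Metric.sphere (0:E3) 1)) :
    ContDiff ℝ 1 (Ffun M g) ∧
    ∀ (x : E3) (j : Fin 3),
      fderiv ℝ (Ffun M g) x (EuclideanSpace.single j 1)
        = -2 * ∫ ω in Metric.sphere (0:E3) 1,
            alphaM M x ω *
              Set.indicator (Set.Ioo (-1 : ℝ) 1) (fun _ => (1:ℝ)) (alphaM M x ω) *
              ω j * g ω * (qf M ω)⁻¹ ∂μH[2] := by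
  have hS : IsCompact (sphere (0 : E3) 1) := isCompact_sphere 0 1
  set μ : Measure E3 := μH[2].restrict (sphere 0 1)
  have : IsFiniteMeasure μ := isFiniteMeasure_restrict.2 hausdorffMeasure_sphere_lt_top.ne
  have hL := continuousOn_alphaCLM hM
  have hw : ContinuousOn (fun ω => g ω * (√(qf M ω))⁻¹) (sphere (0 : E3) 1) :=
    hg.mul (continuousOn_inv_sqrt_qf hM)
  obtain ⟨C, hC⟩ := hS.exists_ae_restrict_norm_le (μ := μH[2]) hL
  obtain ⟨D, hD⟩ := hS.exists_ae_restrict_norm_le (μ := μH[2]) hw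
  have hL' : AEStronglyMeasurable (alphaCLM M) μ := hL.aestronglyMeasurable hS.measurableSet
  have hw' : AEStronglyMeasurable (fun ω => g ω * (√(qf M ω))⁻¹) μ :=
    hw.aestronglyMeasurable hS.measurableSet
  have hN (x : E3) : ∀ᵐ ω ∂μ, alphaCLM M ω x ∉ ({-1, 1} : Set ℝ) := by
    simpa using ae_alphaM_notMem hM x
  rw [Ffun_eq_ridgeIntegral]
  refine ⟨contDiff_one_ridgeIntegral hL' hC hw' hD lipschitzWith_max_one_sub_sq
    measurable_mul_indicator_Ioo (fun _ => hasDerivAt_max_one_sub_sq)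
    (fun _ => continuousAt_mul_indicator_Ioo) hN, fun x j => ?_⟩
  rw [fderiv_ridgeIntegral_apply hL' hC hw' hD lipschitzWith_max_one_sub_sq
    measurable_mul_indicator_Ioo (fun _ => hasDerivAt_max_one_sub_sq) (hN x),
    ← integral_const_mul]
  refine integral_congr_ae (ae_of_all _ fun ω => ?_)
  have hq : (qf M ω)⁻¹ = (√(qf M ω))⁻¹ * (√(qf M ω))⁻¹ := by
    rw [← mul_inv, Real.mul_self_sqrt (qf_nonneg hM ω)]
  simp only [alphaCLM_apply, alphaM, EuclideanSpace.inner_single_left, map_one, one_mul]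
  rw [hq]
  ring

end
end

section
/- Let aⁿ = (a₁ⁿ, a₂ⁿ, a₃ⁿ) ∈ (0,∞)³ be a sequence with aⁿ → (a₁, a₂, 0) as n → ∞, where a₁, a₂ > 0, and let Rⁿ ∈ SO(3) with Rⁿ → R ∈ SO(3). Let μₙ be the normalised restriction of Lebesgue measure to the ellipsoid Eⁿ = Rⁿ D(aⁿ) B̄. Then μₙ converges narrowly to the semi-ellipsoid law μ_{Ẽ} associated with (a₁, a₂, R): for every bounded continuous f: ℝ³ → ℝ, ∫ f dμₙ → (3/(2π a₁ a₂)) ∫_{{x₁²/a₁² + x₂²/a₂² ≤ 1}} f(R(x₁, x₂, 0)) √(1 − x₁²/a₁² − x₂²/a₂²) dx₁ dx₂. -/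
open MeasureTheory Metric Matrix
open scoped ENNReal

noncomputable section

/-!
The ellipsoid law of `R D(a) B̄` is the image of the uniform law on the unit ball under
`x ↦ R D(a) x`, because a linear map scales every volume by the same factor `|det|`. So
`∫ f dμₙ = ∫ f (Rⁿ D(aⁿ) x) dx` against the uniform ball law, and bounded convergence passes to
the limit `∫ f (R D(a₁, a₂, 0) x) dx`. This integrand depends on `(x₁, x₂)` only: integrating out
`x₃` over the ball leaves the weight `2 √(1 - x₁² - x₂²)` on the unit disc, and rescaling
`(x₁, x₂)` by `(a₁, a₂)` turns it into the semi-ellipsoid density on the ellipse.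
-/

open Filter Topology ProbabilityTheory Real

theorem Matrix.det_toEuclideanLin {n : Type*} [Fintype n] [DecidableEq n]
    (M : Matrix n n ℝ) : LinearMap.det (toEuclideanLin M) = M.det := by
  rw [toEuclideanLin_eq_toLin_orthonormal, LinearMap.det_toLin]

theorem ProbabilityTheory.cond_image_linearMap {E : Type*} [NormedAddCommGroup E]
    [NormedSpace ℝ E] [MeasurableSpace E] [BorelSpace E] [FiniteDimensional ℝ E]
    (μ : Measure E) [μ.IsAddHaarMeasure] {L : E →ₗ[ℝ] E} (hL : LinearMap.det L ≠ 0)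
    (s : Set E) : μ[|L '' s] = (μ[|s]).map L := by
  let e : E ≃ᵐ E :=
    (LinearMap.equivOfDetNeZero L hL).toContinuousLinearEquiv.toHomeomorph.toMeasurableEquiv
  have he : ⇑e = L := rfl
  have hmap :
      (μ.restrict s).map L = ENNReal.ofReal |LinearMap.det L|⁻¹ • μ.restrict (L '' s) := by
    conv_lhs => rw [← he, ← e.preimage_image s, ← e.restrict_map]
    rw [he, Measure.map_linearMap_addHaar_eq_smul_addHaar μ hL, Measure.restrict_smul, abs_inv]
  have hdet : 0 < |LinearMap.det L| := abs_pos.2 hL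
  rw [cond, cond, Measure.map_smul, hmap, smul_smul, Measure.addHaar_image_linearMap,
    ENNReal.mul_inv (.inl (by positivity)) (.inl ENNReal.ofReal_ne_top),
    ENNReal.ofReal_inv_of_pos hdet, mul_comm]

theorem Real.volume_setOf_sq_le (s : ℝ) :
    volume {t : ℝ | t ^ 2 ≤ s} = ENNReal.ofReal (2 * √s) := by
  rcases le_or_gt 0 s with hs | hs
  · have : {t : ℝ | t ^ 2 ≤ s} = Set.Icc (-√s) √s := by ext t; exact Real.sq_le hs
    rw [this, Real.volume_Icc]
    ring_nf
  · have : {t : ℝ | t ^ 2 ≤ s} = ∅ := by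
      ext t; simpa using hs.trans_le (sq_nonneg t)
    simp [this, Real.sqrt_eq_zero'.2 hs.le]

theorem setIntegral_closedBall_fin_three_eq_integral_sqrt_mul (φ : ℝ × ℝ → ℝ) (hφ : Continuous φ) :
    ∫ x in closedBall (0 : E3) 1, φ (x 0, x 1)
      = ∫ p : ℝ × ℝ, 2 * √(1 - p.1 ^ 2 - p.2 ^ 2) * φ p := by
  let e : E3 ≃ᵐ ℝ × (Fin 2 → ℝ) :=
    (MeasurableEquiv.toLp 2 (Fin 3 → ℝ)).symm.trans
      (MeasurableEquiv.piFinSuccAbove (fun _ => ℝ) 2)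
  have he : MeasurePreserving e :=
    (EuclideanSpace.volume_preserving_symm_measurableEquiv_toLp _).trans
      (volume_preserving_piFinSuccAbove _ 2)
  set G := (closedBall (0 : E3) 1).indicator fun x => φ (x 0, x 1)
  have hG : Integrable G :=
    ((hφ.comp (by fun_prop)).continuousOn.integrableOn_compact
      (isCompact_closedBall 0 1)).integrable_indicator measurableSet_closedBall
  have hslice : ∀ t y, G (e.symm (t, y)) =
      {t : ℝ | t ^ 2 ≤ 1 - y 0 ^ 2 - y 1 ^ 2}.indicator (fun _ => φ (y 0, y 1)) t := by
    intro t y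
    classical
    have h0 : e.symm (t, y) 0 = y 0 := rfl
    have h1 : e.symm (t, y) 1 = y 1 := rfl
    have h2 : e.symm (t, y) 2 = t := rfl
    have hnorm : ‖e.symm (t, y)‖ ^ 2 = y 0 ^ 2 + y 1 ^ 2 + t ^ 2 := by
      simp [EuclideanSpace.norm_sq_eq, Fin.sum_univ_three, h0, h1, h2]
    have hmem : e.symm (t, y) ∈ closedBall (0 : E3) 1 ↔ t ^ 2 ≤ 1 - y 0 ^ 2 - y 1 ^ 2 := by
      rw [mem_closedBall_zero_iff, ← sq_le_one_iff₀ (norm_nonneg _), hnorm]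
      constructor <;> intro <;> linarith
    simp only [G, Set.indicator_apply, hmem, Set.mem_ofPred_eq, h0, h1]
  have hGe : Integrable (fun z => G (e.symm z)) (volume.prod volume) :=
    (he.symm.integrable_comp_emb e.symm.measurableEmbedding).2 hG
  rw [← integral_indicator measurableSet_closedBall, ← he.symm.integral_comp',
    Measure.volume_eq_prod, integral_prod_symm _ hGe]
  show ∫ y, ∫ t, G (e.symm (t, y)) = _
  have hmeas (s : ℝ) : MeasurableSet {t : ℝ | t ^ 2 ≤ s} :=
    measurableSet_le (by fun_prop) measurable_const
  simp_rw [hslice, integral_indicator_const _ (hmeas _), measureReal_def, Real.volume_setOf_sq_le,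
    ENNReal.toReal_ofReal (by positivity : (0:ℝ) ≤ 2 * √_), smul_eq_mul]
  exact (volume_preserving_finTwoArrow ℝ).integral_comp'
    (g := fun p => 2 * √(1 - p.1 ^ 2 - p.2 ^ 2) * φ p)

theorem integral_comp_mul_prodMk_mul {G : Type*} [NormedAddCommGroup G] [NormedSpace ℝ G]
    (h : ℝ × ℝ → G) {c d : ℝ} (hc : c ≠ 0) (hd : d ≠ 0) :
    ∫ p : ℝ × ℝ, h (c * p.1, d * p.2) = |c * d|⁻¹ • ∫ p, h p := by
  let e : ℝ × ℝ ≃ᵐ ℝ × ℝ :=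
    ((Homeomorph.mulLeft₀ c hc).prodCongr (Homeomorph.mulLeft₀ d hd)).toMeasurableEquiv
  have hmap : Measure.map e volume = ENNReal.ofReal |c * d|⁻¹ • volume := by
    rw [Measure.volume_eq_prod, show ⇑e = Prod.map (c * ·) (d * ·) from rfl,
      ← Measure.map_prod_map _ _ (measurable_const_mul c) (measurable_const_mul d),
      Real.map_volume_mul_left hc, Real.map_volume_mul_left hd, Measure.prod_smul_left,
      Measure.prod_smul_right, smul_smul, ← ENNReal.ofReal_mul (abs_nonneg _), ← abs_mul,
      ← mul_inv, abs_inv]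
  rw [show (fun p : ℝ × ℝ => h (c * p.1, d * p.2)) = fun p => h (e p) from rfl,
    ← integral_map_equiv, hmap, integral_smul_measure, ENNReal.toReal_ofReal (by positivity)]

theorem integral_cond_closedBall_comp_mul_prodMk_mul (g : ℝ × ℝ → ℝ) (hg : Continuous g)
    {a₁ a₂ : ℝ} (ha₁ : 0 < a₁) (ha₂ : 0 < a₂) :
    ∫ x, g (a₁ * x 0, a₂ * x 1) ∂(volume[|closedBall (0 : E3) 1]) =
      3 / (2 * π * a₁ * a₂) *
        ∫ p in {p : ℝ × ℝ | p.1 ^ 2 / a₁ ^ 2 + p.2 ^ 2 / a₂ ^ 2 ≤ 1},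
          g p * √(1 - p.1 ^ 2 / a₁ ^ 2 - p.2 ^ 2 / a₂ ^ 2) := by
  have hscale : ∫ p : ℝ × ℝ, 2 * √(1 - p.1 ^ 2 - p.2 ^ 2) * g (a₁ * p.1, a₂ * p.2) =
      |a₁ * a₂|⁻¹ • ∫ p : ℝ × ℝ, 2 * √(1 - p.1 ^ 2 / a₁ ^ 2 - p.2 ^ 2 / a₂ ^ 2) * g p := by
    rw [← integral_comp_mul_prodMk_mul _ ha₁.ne' ha₂.ne']
    congr 1 with p
    field_simp
  have hsupp : ∀ p ∉ {p : ℝ × ℝ | p.1 ^ 2 / a₁ ^ 2 + p.2 ^ 2 / a₂ ^ 2 ≤ 1},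
      g p * √(1 - p.1 ^ 2 / a₁ ^ 2 - p.2 ^ 2 / a₂ ^ 2) = 0 := by
    intro p hp
    rw [Real.sqrt_eq_zero'.2 (by simp only [Set.mem_ofPred_eq, not_le] at hp; linarith), mul_zero]
  rw [ProbabilityTheory.cond, integral_smul_measure, EuclideanSpace.volume_closedBall_fin_three,
    setIntegral_closedBall_fin_three_eq_integral_sqrt_mul (fun p => g (a₁ * p.1, a₂ * p.2)) (by fun_prop),
    hscale, setIntegral_eq_integral_of_forall_compl_eq_zero hsupp]
  have hswap : ∫ p : ℝ × ℝ, 2 * √(1 - p.1 ^ 2 / a₁ ^ 2 - p.2 ^ 2 / a₂ ^ 2) * g p =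
      2 * ∫ p : ℝ × ℝ, g p * √(1 - p.1 ^ 2 / a₁ ^ 2 - p.2 ^ 2 / a₂ ^ 2) := by
    rw [← integral_const_mul]
    congr 1 with p
    ring
  rw [hswap, ENNReal.ofReal_one, one_pow, one_mul, ENNReal.toReal_inv,
    ENNReal.toReal_ofReal (by positivity), abs_of_pos (mul_pos ha₁ ha₂), smul_eq_mul, smul_eq_mul]
  field_simp
  ring

theorem tendsto_integral_map_toEuclideanLin {ι m n : Type*} [Fintype m] [Fintype n]
    [DecidableEq n] {l : Filter ι} [l.IsCountablyGenerated] (μ : Measure (EuclideanSpace ℝ n))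
    [IsFiniteMeasure μ] {M : ι → Matrix m n ℝ} {M₀ : Matrix m n ℝ} (hM : Tendsto M l (𝓝 M₀))
    {f : EuclideanSpace ℝ m → ℝ} (hf : Continuous f) (hfb : ∃ C, ∀ x, |f x| ≤ C) :
    Tendsto (fun k => ∫ y, f y ∂μ.map (toEuclideanLin (M k))) l
      (𝓝 (∫ y, f y ∂μ.map (toEuclideanLin M₀))) := by
  have hL : ∀ M : Matrix m n ℝ, Continuous (toEuclideanLin M) :=
    fun M => (toEuclideanLin M).continuous_of_finiteDimensional
  simp only [integral_map (hL _).aemeasurable hf.aestronglyMeasurable]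
  obtain ⟨C, hC⟩ := hfb
  refine tendsto_integral_filter_of_norm_le_const
    (.of_forall fun k => (hf.comp (hL (M k))).aestronglyMeasurable)
    ⟨C, .of_forall fun k => ae_of_all _ fun x => hC _⟩ (ae_of_all _ fun x => ?_)
  have hMx : Tendsto (fun k => toEuclideanLin (M k) x) l (𝓝 (toEuclideanLin M₀ x)) :=
    ((PiLp.continuous_toLp 2 _).comp (continuous_id.matrix_mulVec continuous_const)).tendsto _
      |>.comp hM
  exact (hf.tendsto _).comp hMx

theorem toEuclideanLin_mul_diagonal_apply (Q : Matrix (Fin 3) (Fin 3) ℝ) (a₁ a₂ : ℝ) (x : E3) :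
    toEuclideanLin (Q * diagonal ![a₁, a₂, 0]) x =
      toEuclideanLin Q ((EuclideanSpace.equiv (Fin 3) ℝ).symm ![a₁ * x 0, a₂ * x 1, 0]) := by
  change WithLp.toLp 2 ((Q * diagonal ![a₁, a₂, 0]) *ᵥ x.ofLp) =
    WithLp.toLp 2 (Q *ᵥ ![a₁ * x 0, a₂ * x 1, 0])
  rw [← mulVec_mulVec]
  congr 2
  ext i
  fin_cases i <;> simp [mulVec_diagonal]

theorem ellipsoidLaw_tendsto_semiEllipsoidLaw_general
    (a₁ a₂ : ℝ) (ha₁ : 0 < a₁) (ha₂ : 0 < a₂)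
    (a : ℕ → Fin 3 → ℝ) (ha : ∀ n i, 0 < a n i)
    (R : ℕ → Matrix (Fin 3) (Fin 3) ℝ) (hRn : ∀ n, IsSO3 (R n))
    (Rlim : Matrix (Fin 3) (Fin 3) ℝ)
    (haconv0 : Filter.Tendsto (fun n => a n 0) Filter.atTop (nhds a₁))
    (haconv1 : Filter.Tendsto (fun n => a n 1) Filter.atTop (nhds a₂))
    (haconv2 : Filter.Tendsto (fun n => a n 2) Filter.atTop (nhds 0))
    (hRconv : ∀ i j : Fin 3,
      Filter.Tendsto (fun n => R n i j) Filter.atTop (nhds (Rlim i j)))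
    (f : E3 → ℝ) (hf : Continuous f) (hfb : ∃ C : ℝ, ∀ x, |f x| ≤ C) :
    Filter.Tendsto (fun n => ∫ x, f x ∂(ellipsoidLaw (a n) (R n))) Filter.atTop
      (nhds ((3 / (2 * Real.pi * a₁ * a₂)) *
        ∫ p in {p : ℝ × ℝ | p.1 ^ 2 / a₁ ^ 2 + p.2 ^ 2 / a₂ ^ 2 ≤ 1},
          f (Matrix.toEuclideanLin Rlim
              ((EuclideanSpace.equiv (Fin 3) ℝ).symm ![p.1, p.2, 0])) *
            Real.sqrt (1 - p.1 ^ 2 / a₁ ^ 2 - p.2 ^ 2 / a₂ ^ 2))) := by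
  have hlaw (n : ℕ) : ellipsoidLaw (a n) (R n) =
      (volume[|closedBall (0 : E3) 1]).map (toEuclideanLin (R n * diagonal (a n))) := by
    refine cond_image_linearMap volume ?_ _
    rw [det_toEuclideanLin, det_mul, (hRn n).2, det_diagonal, one_mul]
    exact Finset.prod_ne_zero_iff.2 fun i _ => (ha n i).ne'
  have ha_lim : Tendsto a atTop (𝓝 ![a₁, a₂, 0]) := by
    refine tendsto_pi_nhds.2 fun i => ?_
    fin_cases i <;> assumption
  have hR_lim : Tendsto R atTop (𝓝 Rlim) :=
    tendsto_pi_nhds.2 fun i => tendsto_pi_nhds.2 (hRconv i)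
  have hM :
      Tendsto (fun n => R n * diagonal (a n)) atTop (𝓝 (Rlim * diagonal ![a₁, a₂, 0])) :=
    hR_lim.mul ((continuous_id.matrix_diagonal.tendsto _).comp ha_lim)
  simp_rw [hlaw]
  convert tendsto_integral_map_toEuclideanLin (volume[|closedBall (0 : E3) 1]) hM hf hfb using 2
  have hL := (toEuclideanLin (Rlim * diagonal ![a₁, a₂, 0])).continuous_of_finiteDimensional
  rw [integral_map hL.aemeasurable hf.aestronglyMeasurable]
  simp_rw [toEuclideanLin_mul_diagonal_apply]
  exact (integral_cond_closedBall_comp_mul_prodMk_mul _ (by fun_prop) ha₁ ha₂).symm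

/-- if `aⁿ → (a₁, a₂, 0)` with `a₁, a₂ > 0` and `Rⁿ → R` in `SO(3)`, then the
ellipsoid laws of `Eⁿ = Rⁿ D(aⁿ) B̄` converge narrowly to the semi-ellipsoid law associated
with `(a₁, a₂, R)`. -/
theorem ellipsoidLaw_tendsto_semiEllipsoidLaw
    (a₁ a₂ : ℝ) (ha₁ : 0 < a₁) (ha₂ : 0 < a₂)
    (a : ℕ → Fin 3 → ℝ) (ha : ∀ n i, 0 < a n i)
    (R : ℕ → Matrix (Fin 3) (Fin 3) ℝ) (hRn : ∀ n, IsSO3 (R n))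
    (Rlim : Matrix (Fin 3) (Fin 3) ℝ) (hRlim : IsSO3 Rlim)
    (haconv0 : Filter.Tendsto (fun n => a n 0) Filter.atTop (nhds a₁))
    (haconv1 : Filter.Tendsto (fun n => a n 1) Filter.atTop (nhds a₂))
    (haconv2 : Filter.Tendsto (fun n => a n 2) Filter.atTop (nhds 0))
    (hRconv : ∀ i j : Fin 3,
      Filter.Tendsto (fun n => R n i j) Filter.atTop (nhds (Rlim i j)))
    (f : E3 → ℝ) (hf : Continuous f) (hfb : ∃ C : ℝ, ∀ x, |f x| ≤ C) :
    Filter.Tendsto (fun n => ∫ x, f x ∂(ellipsoidLaw (a n) (R n))) Filter.atTop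
      (nhds ((3 / (2 * Real.pi * a₁ * a₂)) *
        ∫ p in {p : ℝ × ℝ | p.1 ^ 2 / a₁ ^ 2 + p.2 ^ 2 / a₂ ^ 2 ≤ 1},
          f (Matrix.toEuclideanLin Rlim
              ((EuclideanSpace.equiv (Fin 3) ℝ).symm ![p.1, p.2, 0])) *
            Real.sqrt (1 - p.1 ^ 2 / a₁ ^ 2 - p.2 ^ 2 / a₂ ^ 2))) :=
  ellipsoidLaw_tendsto_semiEllipsoidLaw_general a₁ a₂ ha₁ ha₂ a ha R hRn Rlim haconv0 haconv1
    haconv2 hRconv f hf hfb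
end
end
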